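/- Let a ≥ 0, r ∈ ℕ₀, and fix x ∈ [0,∞). Define μ*_{n,r}^a(x) = Σ_{k=0}^{∞} W_{n,k}^a(x)·(k/n − x)^r. Then μ*_{n,r}^a(x) = O(n^{−⌊(r+1)/2⌋}) as n → ∞; that is, there exist constants C > 0 and N ∈ ℕ such that |μ*_{n,r}^a(x)| ≤ C·n^{−⌊(r+1)/2⌋} for all n ≥ N. -/

import Mathlib

/-!
The generating function of `k ↦ P_k(n,a)/k!` is `e^{at} (1-t)^{-n}`, so `W_{n+1,·}^a(x)` is the
Cauchy product of `W_{n,·}^a(x)` with the geometric weights `(1+x)⁻¹ (x/(1+x))^m`, which have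
mass `1` and mean `x`, while `W_{0,·}^a(x)` is a Poisson sequence. Hence the moments
`M_n(r) = ∑_k W_{n,k}^a(x) (k - n x)^r` satisfy `M_{n+1}(r) = ∑_t C(r,t) M_n(t) γ(r-t)`,
where `γ` are the central moments of the geometric weights, `γ 0 = 1` and `γ 1 = 0`. The
increment `M_{n+1}(r) - M_n(r)` therefore only involves `M_n(t)` with `t ≤ r - 2`, and
induction on `r` gives `M_n(r) = O(n^{⌊r/2⌋})`. Finally `μ*_{n,r}^a(x) = M_n(r) / n^r` and
`⌊r/2⌋ - r = -⌊(r+1)/2⌋`.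
-/

open MeasureTheory Filter

noncomputable section

/-- Rising factorial `(n)_i = n(n+1)⋯(n+i-1)`, with `(n)_0 = 1`. -/
def risingFac (n : ℕ) : ℕ → ℝ
  | 0 => 1
  | i + 1 => risingFac n i * ((n : ℝ) + i)

/-- `P_k(n,a) = Σ_{i=0}^{k} C(k,i) (n)_i a^(k-i)`. -/
def Pba (k n : ℕ) (a : ℝ) : ℝ :=
  ∑ i ∈ Finset.range (k + 1), (k.choose i : ℝ) * risingFac n i * a ^ (k - i)

/-- Generalized Baskakov basis function `W_{n,k}^a(x)`. -/
def Wgb (a : ℝ) (n k : ℕ) (x : ℝ) : ℝ :=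
  Real.exp (-(a * x) / (1 + x)) * (Pba k n a / (Nat.factorial k : ℝ)) * x ^ k /
    (1 + x) ^ (n + k)

/-- Generalized Baskakov–Kantorovich operator `K_n^a(f;x)`. -/
def Kgb (a : ℝ) (n : ℕ) (f : ℝ → ℝ) (x : ℝ) : ℝ :=
  ((n : ℝ) + 1) * ∑' k : ℕ,
    Wgb a n k x * ∫ t in ((k : ℝ) / ((n : ℝ) + 1))..(((k : ℝ) + 1) / ((n : ℝ) + 1)), f t

/-- The moment `μ*_{n,r}^a(x) = Σ_k W_{n,k}^a(x)·(k/n − x)^r`. -/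
def muStarMoment (a : ℝ) (n r : ℕ) (x : ℝ) : ℝ :=
  ∑' k : ℕ, Wgb a n k x * ((k : ℝ) / (n : ℝ) - x) ^ r

open Finset Asymptotics

lemma risingFac_eq_ascFactorial (n i : ℕ) : risingFac n i = n.ascFactorial i := by
  induction i with
  | zero => simp [risingFac]
  | succ i ih => rw [risingFac, ih, Nat.ascFactorial_succ]; push_cast; ring

lemma risingFac_div_factorial (n i : ℕ) : risingFac n i / i.factorial = n.multichoose i := by
  rw [risingFac_eq_ascFactorial, Nat.ascFactorial_eq_factorial_mul_choose', ← Nat.multichoose_eq]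
  push_cast
  field_simp

def pbaCoeff (a : ℝ) (n k : ℕ) : ℝ := Pba k n a / k.factorial

lemma pbaCoeff_eq_sum (a : ℝ) (n k : ℕ) :
    pbaCoeff a n k =
      ∑ i ∈ range (k + 1), (n.multichoose i : ℝ) * (a ^ (k - i) / (k - i).factorial) := by
  rw [pbaCoeff, Pba, sum_div]
  refine sum_congr rfl fun i hi => ?_
  have hik : i ≤ k := Nat.lt_succ_iff.mp (mem_range.mp hi)
  have hchoose : (k.choose i : ℝ) * i.factorial * (k - i).factorial = k.factorial := by
    exact_mod_cast Nat.choose_mul_factorial_mul_factorial hik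
  rw [← risingFac_div_factorial]
  field_simp
  linear_combination risingFac n i * a ^ (k - i) * hchoose

lemma pbaCoeff_zero_left (a : ℝ) (k : ℕ) : pbaCoeff a 0 k = a ^ k / k.factorial := by
  rw [pbaCoeff_eq_sum, sum_eq_single 0]
  · simp
  · rintro (_ | i) _ hi
    · exact absurd rfl hi
    · simp
  · simp

lemma pbaCoeff_zero_right (a : ℝ) (n : ℕ) : pbaCoeff a n 0 = 1 := by
  simp [pbaCoeff_eq_sum]

lemma pbaCoeff_succ_succ (a : ℝ) (n k : ℕ) :
    pbaCoeff a (n + 1) (k + 1) = pbaCoeff a (n + 1) k + pbaCoeff a n (k + 1) := by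
  simp only [pbaCoeff_eq_sum, sum_range_succ' _ (k + 1), Nat.multichoose_succ_succ,
    Nat.add_sub_add_right, Nat.multichoose_zero_right, Nat.cast_add, add_mul, sum_add_distrib]
  ring

lemma pbaCoeff_succ_left (a : ℝ) (n k : ℕ) :
    pbaCoeff a (n + 1) k = ∑ j ∈ range (k + 1), pbaCoeff a n j := by
  induction k with
  | zero => simp [pbaCoeff_zero_right]
  | succ k ih => rw [sum_range_succ, ← ih, pbaCoeff_succ_succ]

def geomWeight (x : ℝ) (m : ℕ) : ℝ := (1 + x)⁻¹ * (x / (1 + x)) ^ m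

lemma Wgb_eq (a x : ℝ) (n k : ℕ) :
    Wgb a n k x =
      Real.exp (-(a * x) / (1 + x)) * pbaCoeff a n k * (x / (1 + x)) ^ k * ((1 + x)⁻¹) ^ n := by
  rw [Wgb, pbaCoeff, pow_add, div_pow, inv_pow]
  ring

lemma Wgb_zero_left (a x : ℝ) (k : ℕ) :
    Wgb a 0 k x = Real.exp (-(a * x) / (1 + x)) * ((a * x / (1 + x)) ^ k / k.factorial) := by
  rw [Wgb_eq, pbaCoeff_zero_left, mul_div_assoc, mul_pow]
  ring

lemma Wgb_succ_left (a x : ℝ) (n k : ℕ) :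
    Wgb a (n + 1) k x = ∑ j ∈ range (k + 1), Wgb a n j x * geomWeight x (k - j) := by
  have hterm : ∀ j ∈ range (k + 1), Wgb a n j x * geomWeight x (k - j) =
      pbaCoeff a n j *
        (Real.exp (-(a * x) / (1 + x)) * (x / (1 + x)) ^ k * ((1 + x)⁻¹) ^ (n + 1)) := by
    intro j hj
    rw [Wgb_eq, geomWeight, ← Nat.add_sub_cancel' (Nat.lt_succ_iff.mp (mem_range.mp hj)),
      pow_add, Nat.add_sub_cancel_left]
    ring
  rw [sum_congr rfl hterm, ← sum_mul, ← pbaCoeff_succ_left, Wgb_eq]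
  ring

def HasFiniteMoments (f : ℕ → ℝ) : Prop :=
  ∀ s : ℕ, Summable fun k : ℕ => ‖f k‖ * (k : ℝ) ^ s

def momentAbout (f : ℕ → ℝ) (c : ℝ) (r : ℕ) : ℝ :=
  ∑' k : ℕ, f k * ((k : ℝ) - c) ^ r

namespace HasFiniteMoments

variable {f g : ℕ → ℝ}

lemma norm (hf : HasFiniteMoments f) : HasFiniteMoments fun k => ‖f k‖ := by
  simpa only [HasFiniteMoments, norm_norm] using hf

lemma const_mul (hf : HasFiniteMoments f) (c : ℝ) : HasFiniteMoments fun k => c * f k :=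
  fun s => ((hf s).mul_left ‖c‖).congr fun k => by rw [norm_mul, mul_assoc]

lemma summable_norm_mul_sub_pow (hf : HasFiniteMoments f) (c : ℝ) (t : ℕ) :
    Summable fun k : ℕ => ‖f k * ((k : ℝ) - c) ^ t‖ := by
  refine Summable.of_nonneg_of_le (fun _ => norm_nonneg _) (fun k => ?_)
    (summable_sum fun s (_ : s ∈ range (t + 1)) =>
      (hf s).mul_right ((t.choose s : ℝ) * |c| ^ (t - s)))
  have hle : |(k : ℝ) - c| ≤ k + |c| := (abs_sub _ _).trans_eq (by rw [Nat.abs_cast])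
  calc ‖f k * ((k : ℝ) - c) ^ t‖ = ‖f k‖ * |(k : ℝ) - c| ^ t := by
        simp only [norm_mul, norm_pow, Real.norm_eq_abs]
    _ ≤ ‖f k‖ * ((k : ℝ) + |c|) ^ t := by gcongr
    _ = ∑ s ∈ range (t + 1),
          ‖f k‖ * (k : ℝ) ^ s * ((t.choose s : ℝ) * |c| ^ (t - s)) := by
        rw [add_pow, mul_sum]
        exact sum_congr rfl fun s _ => by ring

lemma hasSum_cauchyProduct_mul_sub_pow (hf : HasFiniteMoments f) (hg : HasFiniteMoments g)
    (c d : ℝ) (r : ℕ) :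
    HasSum (fun k : ℕ => (∑ j ∈ range (k + 1), f j * g (k - j)) * ((k : ℝ) - (c + d)) ^ r)
      (∑ t ∈ range (r + 1),
        (r.choose t : ℝ) * momentAbout f c t * momentAbout g d (r - t)) := by
  set F : ℕ → ℕ → ℝ := fun t j => f j * ((j : ℝ) - c) ^ t
  set G : ℕ → ℕ → ℝ := fun t m => (r.choose t : ℝ) * (g m * ((m : ℝ) - d) ^ (r - t))
  have hG : ∀ t, Summable fun m => ‖G t m‖ := fun t =>
    ((hg.summable_norm_mul_sub_pow d (r - t)).mul_left ‖(r.choose t : ℝ)‖).congr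
      fun m => (norm_mul _ _).symm
  have hprod : ∀ t, HasSum (fun k => ∑ j ∈ range (k + 1), F t j * G t (k - j))
      ((∑' j, F t j) * ∑' m, G t m) := fun t => by
    rw [tsum_mul_tsum_eq_tsum_sum_range_of_summable_norm (hf.summable_norm_mul_sub_pow c t) (hG t)]
    exact (summable_norm_sum_mul_range_of_summable_norm
      (hf.summable_norm_mul_sub_pow c t) (hG t)).of_norm.hasSum
  convert hasSum_sum fun t (_ : t ∈ range (r + 1)) => hprod t using 1
  · funext k
    rw [sum_mul, sum_comm]
    refine sum_congr rfl fun j hj => ?_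
    have hjk : j ≤ k := Nat.lt_succ_iff.mp (mem_range.mp hj)
    have hsplit : (k : ℝ) - (c + d) = ((j : ℝ) - c) + (((k - j : ℕ) : ℝ) - d) := by
      push_cast [Nat.cast_sub hjk]
      ring
    rw [hsplit, add_pow, mul_sum]
    exact sum_congr rfl fun t _ => by ring
  · refine sum_congr rfl fun t _ => ?_
    rw [tsum_mul_left, momentAbout, momentAbout]
    ring

lemma cauchyProduct (hf : HasFiniteMoments f) (hg : HasFiniteMoments g) :
    HasFiniteMoments fun k => ∑ j ∈ range (k + 1), f j * g (k - j) := by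
  intro s
  refine Summable.of_nonneg_of_le (fun _ => by positivity) (fun k => ?_)
    (hf.norm.hasSum_cauchyProduct_mul_sub_pow hg.norm 0 0 s).summable
  rw [add_zero, sub_zero]
  gcongr
  exact (norm_sum_le _ _).trans_eq (sum_congr rfl fun j _ => norm_mul _ _)

end HasFiniteMoments

lemma hasFiniteMoments_pow_div_factorial (y : ℝ) :
    HasFiniteMoments fun k => y ^ k / k.factorial := by
  intro s
  refine Summable.of_nonneg_of_le (fun _ => by positivity) (fun k => ?_)
    (Real.summable_pow_div_factorial (2 ^ s * |y|))
  have hk : (k : ℝ) ^ s ≤ (2 ^ s) ^ k := by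
    rw [← pow_mul, mul_comm, pow_mul]
    gcongr
    exact_mod_cast Nat.lt_two_pow_self.le
  calc ‖y ^ k / k.factorial‖ * (k : ℝ) ^ s = |y| ^ k * (k : ℝ) ^ s / k.factorial := by
        rw [norm_div, norm_pow, Real.norm_eq_abs, RCLike.norm_natCast, div_mul_eq_mul_div]
    _ ≤ |y| ^ k * (2 ^ s) ^ k / k.factorial := by gcongr
    _ = (2 ^ s * |y|) ^ k / k.factorial := by ring

section BinomialRecurrence

variable {M : ℕ → ℕ → ℝ} {γ : ℕ → ℝ}

lemma sub_eq_sum_of_binomial_recurrence (hγ0 : γ 0 = 1) (hγ1 : γ 1 = 0)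
    (hM : ∀ n r, M (n + 1) r = ∑ t ∈ range (r + 1), (r.choose t : ℝ) * M n t * γ (r - t))
    (n r : ℕ) :
    M (n + 1) r - M n r = ∑ t ∈ range (r - 1), (r.choose t : ℝ) * M n t * γ (r - t) := by
  rcases r with _ | r
  · simp [hM, hγ0]
  · rw [hM, sum_range_succ, sum_range_succ, Nat.sub_self, Nat.add_sub_cancel_left, hγ0, hγ1,
      Nat.add_sub_cancel, Nat.choose_self]
    ring

lemma isBigO_pow_succ_of_sub_isBigO {u : ℕ → ℝ} {e : ℕ}
    (h : (fun n => u (n + 1) - u n) =O[atTop] fun n => (n : ℝ) ^ e) :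
    u =O[atTop] fun n => (n : ℝ) ^ (e + 1) := by
  obtain ⟨C, hC, hbound⟩ := bound_of_isBigO_nat_atTop h
  have hstep : ∀ n ≥ 1, |u n| ≤ |u 1| + C * (n : ℝ) ^ (e + 1) := by
    intro n hn
    induction n, hn using Nat.le_induction with
    | base => simp only [Nat.cast_one, one_pow, mul_one]; linarith
    | succ n hn ih =>
      have hd := hbound (x := n) (pow_ne_zero e (Nat.cast_ne_zero.2 (by omega)))
      simp only [Real.norm_eq_abs, abs_pow, Nat.abs_cast] at hd
      have hpow : (n : ℝ) ^ (e + 1) + (n : ℝ) ^ e ≤ ((n : ℝ) + 1) ^ (e + 1) := by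
        calc (n : ℝ) ^ (e + 1) + (n : ℝ) ^ e
            ≤ ((n : ℝ) + 1) ^ e * n + ((n : ℝ) + 1) ^ e := by
              rw [pow_succ]
              gcongr
              all_goals linarith
          _ = ((n : ℝ) + 1) ^ (e + 1) := by ring
      push_cast
      calc |u (n + 1)| ≤ |u n| + |u (n + 1) - u n| := by
            linarith [abs_sub_abs_le_abs_sub (u (n + 1)) (u n)]
        _ ≤ |u 1| + C * ((n : ℝ) ^ (e + 1) + (n : ℝ) ^ e) := by linarith
        _ ≤ |u 1| + C * ((n : ℝ) + 1) ^ (e + 1) := by gcongr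
  refine IsBigO.of_bound (|u 1| + C) ?_
  filter_upwards [eventually_ge_atTop 1] with n hn
  have hone : (1 : ℝ) ≤ (n : ℝ) ^ (e + 1) := one_le_pow₀ (by exact_mod_cast hn)
  rw [Real.norm_eq_abs, Real.norm_of_nonneg (by positivity)]
  nlinarith [hstep n hn, abs_nonneg (u 1)]

/-- The moment form of the fact that a sum of `n` independent centred variables has `r`-th
moment `O(n^{r/2})`, with `γ` the centred moments of one summand. -/
theorem isBigO_of_binomial_recurrence (hγ0 : γ 0 = 1) (hγ1 : γ 1 = 0)
    (hM : ∀ n r, M (n + 1) r = ∑ t ∈ range (r + 1), (r.choose t : ℝ) * M n t * γ (r - t))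
    (r : ℕ) : (fun n => M n r) =O[atTop] fun n => (n : ℝ) ^ (r / 2) := by
  induction r using Nat.strong_induction_on with
  | _ r ih =>
  have hsub := sub_eq_sum_of_binomial_recurrence hγ0 hγ1 hM
  rcases lt_or_ge r 2 with hr | hr
  · have hconst : ∀ n, M n r = M 0 r := fun n => by
      induction n with
      | zero => rfl
      | succ n ihn => rw [← ihn, ← sub_eq_zero, hsub, show r - 1 = 0 by omega, sum_range_zero]
    simpa [hconst, Nat.div_eq_of_lt hr] using isBigO_const_one ℝ (M 0 r) atTop
  · obtain ⟨e, rfl⟩ : ∃ e, r = e + 2 := ⟨r - 2, by omega⟩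
    rw [show (e + 2) / 2 = e / 2 + 1 by omega]
    refine isBigO_pow_succ_of_sub_isBigO ?_
    simp_rw [hsub]
    refine IsBigO.fun_sum fun t ht => ?_
    have htr : t < e + 1 := by simpa using ht
    have hpow : (fun n : ℕ => (n : ℝ) ^ (t / 2)) =O[atTop] fun n => (n : ℝ) ^ (e / 2) :=
      IsBigO.pow_of_le_right (f := fun n : ℕ => (n : ℝ))
        (Filter.eventually_atTop.2 ⟨1, fun n hn => by simpa using hn⟩) (by omega)
    exact (((ih t (by omega)).trans hpow).const_mul_left
      ((e + 2).choose t * γ (e + 2 - t))).congr_left fun n => by ring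

end BinomialRecurrence

section Baskakov

variable {x : ℝ}

lemma norm_div_one_add_lt_one (hx : 0 ≤ x) : ‖x / (1 + x)‖ < 1 := by
  rw [Real.norm_of_nonneg (by positivity), div_lt_one (by positivity)]
  linarith

lemma geomWeight_nonneg (hx : 0 ≤ x) (m : ℕ) : 0 ≤ geomWeight x m := by
  unfold geomWeight
  positivity

lemma hasFiniteMoments_geomWeight (hx : 0 ≤ x) : HasFiniteMoments (geomWeight x) := fun s =>
  ((summable_pow_mul_geometric_of_norm_lt_one s (norm_div_one_add_lt_one hx)).mul_left
    (1 + x)⁻¹).congr fun m => by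
      rw [Real.norm_of_nonneg (geomWeight_nonneg hx m), geomWeight]
      ring

lemma hasSum_geomWeight (hx : 0 ≤ x) : HasSum (geomWeight x) 1 := by
  have h := (hasSum_geometric_of_norm_lt_one (norm_div_one_add_lt_one hx)).mul_left (1 + x)⁻¹
  have hx1 : 1 + x ≠ 0 := by positivity
  rwa [show (1 + x)⁻¹ * (1 - x / (1 + x))⁻¹ = 1 by field_simp; ring] at h

lemma hasSum_geomWeight_mul_self (hx : 0 ≤ x) : HasSum (fun m : ℕ => geomWeight x m * m) x := by
  have h := (hasSum_coe_mul_geometric_of_norm_lt_one (norm_div_one_add_lt_one hx)).mul_left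
    (1 + x)⁻¹
  have hx1 : 1 + x ≠ 0 := by positivity
  rw [show (1 + x)⁻¹ * (x / (1 + x) / (1 - x / (1 + x)) ^ 2) = x by field_simp; ring] at h
  exact h.congr_fun fun m => by rw [geomWeight]; ring

lemma momentAbout_geomWeight_zero (hx : 0 ≤ x) : momentAbout (geomWeight x) x 0 = 1 := by
  simpa [momentAbout] using (hasSum_geomWeight hx).tsum_eq

lemma momentAbout_geomWeight_one (hx : 0 ≤ x) : momentAbout (geomWeight x) x 1 = 0 := by
  have h := (hasSum_geomWeight_mul_self hx).sub ((hasSum_geomWeight hx).mul_left x)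
  rw [mul_one, sub_self] at h
  rw [momentAbout, ← h.tsum_eq]
  exact tsum_congr fun m => by ring

lemma hasFiniteMoments_Wgb (hx : 0 ≤ x) (a : ℝ) (n : ℕ) :
    HasFiniteMoments fun k => Wgb a n k x := by
  induction n with
  | zero =>
    simpa only [Wgb_zero_left] using (hasFiniteMoments_pow_div_factorial _).const_mul _
  | succ n ih =>
    simpa only [Wgb_succ_left] using ih.cauchyProduct (hasFiniteMoments_geomWeight hx)

lemma momentAbout_Wgb_succ (hx : 0 ≤ x) (a : ℝ) (n r : ℕ) :
    momentAbout (fun k => Wgb a (n + 1) k x) ((n + 1 : ℕ) * x) r =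
      ∑ t ∈ range (r + 1), (r.choose t : ℝ) * momentAbout (fun k => Wgb a n k x) (n * x) t *
        momentAbout (geomWeight x) x (r - t) := by
  rw [← ((hasFiniteMoments_Wgb hx a n).hasSum_cauchyProduct_mul_sub_pow
    (hasFiniteMoments_geomWeight hx) (n * x) x r).tsum_eq, momentAbout]
  push_cast
  simp only [Wgb_succ_left, add_mul, one_mul]

lemma muStarMoment_eq_momentAbout (a : ℝ) {n : ℕ} (hn : n ≠ 0) (r : ℕ) :
    muStarMoment a n r x = momentAbout (fun k => Wgb a n k x) (n * x) r / (n : ℝ) ^ r := by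
  rw [muStarMoment, momentAbout, ← tsum_div_const]
  refine tsum_congr fun k => ?_
  have hn' : (n : ℝ) ≠ 0 := Nat.cast_ne_zero.2 hn
  rw [mul_div_assoc, ← div_pow, sub_div, mul_div_cancel_left₀ x hn']

lemma isBigO_momentAbout_Wgb (hx : 0 ≤ x) (a : ℝ) (r : ℕ) :
    (fun n : ℕ => momentAbout (fun k => Wgb a n k x) (n * x) r) =O[atTop]
      fun n => (n : ℝ) ^ (r / 2) :=
  isBigO_of_binomial_recurrence (momentAbout_geomWeight_zero hx) (momentAbout_geomWeight_one hx)
    (momentAbout_Wgb_succ hx a) r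

lemma isBigO_muStarMoment (hx : 0 ≤ x) (a : ℝ) (r : ℕ) :
    (fun n => muStarMoment a n r x) =O[atTop] fun n => ((n : ℝ) ^ ((r + 1) / 2))⁻¹ := by
  refine ((isBigO_momentAbout_Wgb hx a r).mul
    (isBigO_refl (fun n : ℕ => ((n : ℝ) ^ r)⁻¹) atTop)).congr' ?_ ?_
  all_goals filter_upwards [eventually_ne_atTop 0] with n hn
  · rw [muStarMoment_eq_momentAbout a hn, div_eq_mul_inv]
  · have hn' : (n : ℝ) ≠ 0 := Nat.cast_ne_zero.2 hn
    have hsplit : (n : ℝ) ^ r = (n : ℝ) ^ (r / 2) * (n : ℝ) ^ ((r + 1) / 2) := by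
      rw [← pow_add]
      congr 1
      omega
    rw [hsplit, mul_inv, ← mul_assoc, mul_inv_cancel₀ (pow_ne_zero _ hn'), one_mul]

end Baskakov

theorem statement15_general (a : ℝ) (r : ℕ) (x : ℝ) (hx : 0 ≤ x) :
    ∃ C > (0 : ℝ), ∃ N : ℕ, ∀ n ≥ N,
      |muStarMoment a n r x| ≤ C / (n : ℝ) ^ ((r + 1) / 2) := by
  obtain ⟨C, hC, hbound⟩ := (isBigO_muStarMoment hx a r).exists_pos
  obtain ⟨N, hN⟩ := eventually_atTop.1 hbound.bound
  exact ⟨C, hC, N, fun n hn => by simpa [div_eq_mul_inv] using hN n hn⟩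

/-- `μ*_{n,r}^a(x) = O(n^{−⌊(r+1)/2⌋})` as `n → ∞`
(here `(r+1)/2` is the natural-number floor `⌊(r+1)/2⌋`). -/
theorem statement15 (a : ℝ) (ha : 0 ≤ a) (r : ℕ) (x : ℝ) (hx : 0 ≤ x) :
    ∃ C > (0 : ℝ), ∃ N : ℕ, ∀ n ≥ N,
      |muStarMoment a n r x| ≤ C / (n : ℝ) ^ ((r + 1) / 2) :=
  statement15_general a r x hx
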